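/- Let x ∈ ℂ with x ≠ 0 and let a₁₁, a₁₂, a₂₁, a₂₂ ∈ ℂ with a₁₁a₂₂ − a₁₂a₂₁ ≠ 0, and let 𝒜 be the 4 × 4 matrix with rows (x,0,0,0), (0,a₁₁,a₁₂,0), (0,a₂₁,a₂₂,0), (0,0,0,1). Then the orthogonal complement of the span of the vectors (1,α) ⊗ 𝒜(1,α,α²,α³) over all α ∈ ℂ is a genuinely entangled subspace of ℂ² ⊗ ℂ² ⊗ ℂ² if and only if a₁₁ ≠ 0, a₁₂ ≠ 0, a₂₁ ≠ 0, a₂₂ ≠ 0, a₁₁a₂₂ − x ≠ 0, and a₁₂a₂₁ − x ≠ 0. -/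

import Mathlib

noncomputable section

abbrev TriH (d₁ d₂ d₃ : ℕ) := EuclideanSpace ℂ (Fin d₁ × Fin d₂ × Fin d₃)

def BiprodA {d₁ d₂ d₃ : ℕ} (ψ : TriH d₁ d₂ d₃) : Prop :=
  ∃ (a : Fin d₁ → ℂ) (g : Fin d₂ × Fin d₃ → ℂ), ∀ i j k, ψ (i, j, k) = a i * g (j, k)

def BiprodB {d₁ d₂ d₃ : ℕ} (ψ : TriH d₁ d₂ d₃) : Prop :=
  ∃ (b : Fin d₂ → ℂ) (g : Fin d₁ × Fin d₃ → ℂ), ∀ i j k, ψ (i, j, k) = b j * g (i, k)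

def BiprodC {d₁ d₂ d₃ : ℕ} (ψ : TriH d₁ d₂ d₃) : Prop :=
  ∃ (c : Fin d₃ → ℂ) (g : Fin d₁ × Fin d₂ → ℂ), ∀ i j k, ψ (i, j, k) = c k * g (i, j)

def IsGME3 {d₁ d₂ d₃ : ℕ} (ψ : TriH d₁ d₂ d₃) : Prop :=
  ψ ≠ 0 ∧ ¬ BiprodA ψ ∧ ¬ BiprodB ψ ∧ ¬ BiprodC ψ

def IsGES3 {d₁ d₂ d₃ : ℕ} (V : Submodule ℂ (TriH d₁ d₂ d₃)) : Prop :=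
  ∀ ψ ∈ V, ψ ≠ 0 → IsGME3 ψ

def idx4 (j k : Fin 2) : Fin 4 := ⟨2 * j.1 + k.1, by have := j.2; have := k.2; omega⟩

def curveA (A : Matrix (Fin 4) (Fin 4) ℂ) (α : ℂ) : TriH 2 2 2 :=
  WithLp.toLp 2 (fun p : Fin 2 × Fin 2 × Fin 2 =>
    ![(1 : ℂ), α] p.1 * A.mulVec ![1, α, α ^ 2, α ^ 3] (idx4 p.2.1 p.2.2))

/-!
Expanding `⟪(1, α) ⊗ 𝒜 (1, α, α², α³), ψ⟫` in powers of `ᾱ` shows that the orthogonal complement is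
cut out by five linear equations in the coordinates of `ψ` (the coefficients being conjugates of
`x, aᵢⱼ`). Exchanging the second and third parties maps this system to the one with
`(a₁₁, a₁₂, a₂₁, a₂₂)` replaced by `(a₂₁, a₂₂, a₁₁, a₁₂)` and exchanges products across `B|AC` and
`C|AB`, so only the cuts `A|BC` and `B|AC` need an argument. For `A|BC`, a solution `a ⊗ g` is a
factorisation of the zero polynomial into a linear and a cubic factor, so `a = 0` or `g = 0`.
For `B|AC`, a case analysis on the support of the `B`-factor shows that products are excluded as
soon as `a₁₂, a₂₁ ≠ 0` and `a₁₁a₂₂ ≠ x`, and when one of these fails an explicit nonzero product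
`b ⊗ G` solves the system.
-/

open ComplexConjugate

lemma Submodule.mem_orthogonal_span_range_iff {𝕜 E ι : Type*} [RCLike 𝕜] [NormedAddCommGroup E]
    [InnerProductSpace 𝕜 E] (f : ι → E) (v : E) :
    v ∈ (span 𝕜 (Set.range f))ᗮ ↔ ∀ i, inner 𝕜 (f i) v = 0 := by
  rw [← span_singleton_le_iff_mem, ← isOrtho_iff_le, isOrtho_comm, isOrtho_span]
  simp

lemma eq_zero_of_forall_sum_mul_pow_eq_zero {R : Type*} [CommRing R] [IsDomain R] [Infinite R]
    {n : ℕ} {c : Fin n → R} (h : ∀ z : R, ∑ i, c i * z ^ (i : ℕ) = 0) : c = 0 := by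
  classical
  apply Polynomial.injective_ofFn n
  rw [map_zero]
  exact Polynomial.funext fun z => by
    simp [Polynomial.ofFn_eq_sum_monomial, Polynomial.eval_finsetSum, h]

lemma eq_zero_or_eq_zero_of_linear_mul_cubic {R : Type*} [CommRing R] [IsDomain R]
    {a₀ a₁ p₀ p₁ p₂ p₃ : R} (h₀ : a₀ * p₀ = 0) (h₁ : a₀ * p₁ + a₁ * p₀ = 0)
    (h₂ : a₀ * p₂ + a₁ * p₁ = 0) (h₃ : a₀ * p₃ + a₁ * p₂ = 0) (h₄ : a₁ * p₃ = 0) :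
    (a₀ = 0 ∧ a₁ = 0) ∨ (p₀ = 0 ∧ p₁ = 0 ∧ p₂ = 0 ∧ p₃ = 0) := by
  by_cases ha₀ : a₀ = 0
  · subst ha₀
    simp only [zero_mul, zero_add, mul_eq_zero] at h₁ h₂ h₃ h₄
    tauto
  · have hp₀ : p₀ = 0 := (mul_eq_zero.1 h₀).resolve_left ha₀
    have hp₁ : p₁ = 0 := by simpa [hp₀, ha₀] using h₁
    have hp₂ : p₂ = 0 := by simpa [hp₁, ha₀] using h₂
    have hp₃ : p₃ = 0 := by simpa [hp₂, ha₀] using h₃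
    exact .inr ⟨hp₀, hp₁, hp₂, hp₃⟩

section Tensor

variable {d₁ d₂ d₃ : ℕ}

def tensorB (b : Fin d₂ → ℂ) (G : Matrix (Fin d₁) (Fin d₃) ℂ) : TriH d₁ d₂ d₃ :=
  WithLp.toLp 2 fun p => b p.2.1 * G p.1 p.2.2

@[simp]
lemma tensorB_apply (b : Fin d₂ → ℂ) (G : Matrix (Fin d₁) (Fin d₃) ℂ) (i j k) :
    tensorB b G (i, j, k) = b j * G i k := rfl

lemma biprodB_tensorB (b : Fin d₂ → ℂ) (G : Matrix (Fin d₁) (Fin d₃) ℂ) : BiprodB (tensorB b G) :=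
  ⟨b, fun q => G q.1 q.2, fun _ _ _ => rfl⟩

lemma tensorB_ne_zero {b : Fin d₂ → ℂ} {G : Matrix (Fin d₁) (Fin d₃) ℂ} (hb : b ≠ 0)
    (hG : G ≠ 0) : tensorB b G ≠ 0 := by
  obtain ⟨j, hj⟩ := Function.ne_iff.1 hb
  obtain ⟨i, hi⟩ := Function.ne_iff.1 hG
  obtain ⟨k, hik⟩ := Function.ne_iff.1 hi
  intro h
  exact mul_ne_zero hj hik (by simpa using congrArg (· (i, j, k)) h)

lemma not_isGES3_of_tensorB_mem {V : Submodule ℂ (TriH d₁ d₂ d₃)} {b : Fin d₂ → ℂ}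
    {G : Matrix (Fin d₁) (Fin d₃) ℂ} (hb : b ≠ 0) (hG : G ≠ 0) (hV : tensorB b G ∈ V) :
    ¬ IsGES3 V :=
  fun h => (h _ hV (tensorB_ne_zero hb hG)).2.2.1 (biprodB_tensorB b G)

lemma eq_zero_of_eq_mul_left {ψ : TriH d₁ d₂ d₃} {a : Fin d₁ → ℂ} {g : Fin d₂ × Fin d₃ → ℂ}
    (h : ∀ i j k, ψ (i, j, k) = a i * g (j, k)) (hag : a = 0 ∨ g = 0) : ψ = 0 := by
  ext ⟨i, j, k⟩
  rcases hag with rfl | rfl <;> simp [h]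

lemma eq_zero_of_eq_mul_middle {ψ : TriH d₁ d₂ d₃} {b : Fin d₂ → ℂ} {g : Fin d₁ × Fin d₃ → ℂ}
    (h : ∀ i j k, ψ (i, j, k) = b j * g (i, k)) (hbg : b = 0 ∨ g = 0) : ψ = 0 := by
  ext ⟨i, j, k⟩
  rcases hbg with rfl | rfl <;> simp [h]

def swapBC (ψ : TriH d₁ d₂ d₃) : TriH d₁ d₃ d₂ :=
  WithLp.toLp 2 fun p => ψ (p.1, p.2.2, p.2.1)

@[simp]
lemma swapBC_apply (ψ : TriH d₁ d₂ d₃) (i j k) : swapBC ψ (i, k, j) = ψ (i, j, k) := rfl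

@[simp]
lemma swapBC_swapBC (ψ : TriH d₁ d₂ d₃) : swapBC (swapBC ψ) = ψ := rfl

@[simp]
lemma swapBC_eq_zero_iff {ψ : TriH d₁ d₂ d₃} : swapBC ψ = 0 ↔ ψ = 0 :=
  ⟨fun h => by rw [← swapBC_swapBC ψ, h]; rfl, fun h => by subst h; rfl⟩

lemma BiprodA.swapBC {ψ : TriH d₁ d₂ d₃} (h : BiprodA ψ) : BiprodA (swapBC ψ) :=
  let ⟨a, g, h⟩ := h
  ⟨a, fun q => g (q.2, q.1), fun i k j => h i j k⟩

lemma BiprodB.swapBC {ψ : TriH d₁ d₂ d₃} (h : BiprodB ψ) : BiprodC (swapBC ψ) :=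
  let ⟨b, g, h⟩ := h
  ⟨b, g, fun i k j => h i j k⟩

lemma BiprodC.swapBC {ψ : TriH d₁ d₂ d₃} (h : BiprodC ψ) : BiprodB (swapBC ψ) :=
  let ⟨c, g, h⟩ := h
  ⟨c, g, fun i k j => h i j k⟩

lemma IsGME3.of_swapBC {ψ : TriH d₁ d₂ d₃} (h : IsGME3 (swapBC ψ)) : IsGME3 ψ :=
  ⟨fun h0 => h.1 (swapBC_eq_zero_iff.2 h0), fun hA => h.2.1 hA.swapBC,
    fun hB => h.2.2.2 hB.swapBC, fun hC => h.2.2.1 hC.swapBC⟩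

end Tensor

-- The equations saying that the coefficients of `ᾱ⁰, …, ᾱ⁴` in `⟪curveA 𝒜 α, ψ⟫` vanish, where
-- `X, A, B, C, D` stand for the conjugates of `x, a₁₁, a₁₂, a₂₁, a₂₂`.
def curveSol (X A B C D : ℂ) : Submodule ℂ (TriH 2 2 2) where
  carrier := {ψ | ψ (0,0,0) = 0 ∧ A * ψ (0,0,1) + C * ψ (0,1,0) + X * ψ (1,0,0) = 0 ∧
    B * ψ (0,0,1) + D * ψ (0,1,0) + A * ψ (1,0,1) + C * ψ (1,1,0) = 0 ∧
    ψ (0,1,1) + B * ψ (1,0,1) + D * ψ (1,1,0) = 0 ∧ ψ (1,1,1) = 0}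
  add_mem' := by
    rintro ψ φ ⟨h₀, h₁, h₂, h₃, h₄⟩ ⟨g₀, g₁, g₂, g₃, g₄⟩
    simp only [Set.mem_ofPred_eq, PiLp.add_apply]
    exact ⟨by linear_combination h₀ + g₀, by linear_combination h₁ + g₁,
      by linear_combination h₂ + g₂, by linear_combination h₃ + g₃, by linear_combination h₄ + g₄⟩
  zero_mem' := by simp
  smul_mem' := by
    rintro c ψ ⟨h₀, h₁, h₂, h₃, h₄⟩
    simp only [Set.mem_ofPred_eq, PiLp.smul_apply, smul_eq_mul]
    exact ⟨by linear_combination c * h₀, by linear_combination c * h₁,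
      by linear_combination c * h₂, by linear_combination c * h₃, by linear_combination c * h₄⟩

section CurveSol

variable {X A B C D : ℂ} {ψ : TriH 2 2 2}

lemma swapBC_mem_curveSol (h : ψ ∈ curveSol X A B C D) :
    swapBC ψ ∈ curveSol X C D A B := by
  obtain ⟨h₀, h₁, h₂, h₃, h₄⟩ := h
  refine ⟨h₀, ?_, ?_, ?_, h₄⟩ <;> simp only [swapBC_apply]
  · linear_combination h₁
  · linear_combination h₂
  · linear_combination h₃

lemma IsGES3.curveSol_swap (h : IsGES3 (curveSol X A B C D)) : IsGES3 (curveSol X C D A B) :=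
  fun φ hφ hne => (h (swapBC φ) (swapBC_mem_curveSol hφ) (by simpa using hne)).of_swapBC

lemma IsGES3.curveSol_coeff₁₂_ne_zero (hX : X ≠ 0) (h : IsGES3 (curveSol X A B C D)) :
    B ≠ 0 := by
  intro hB
  refine not_isGES3_of_tensorB_mem (b := ![1, 0]) (G := !![0, X; -A, 0]) (by simp)
    (fun hG => hX (by simpa using congr($hG 0 1))) ?_ h
  refine ⟨?_, ?_, ?_, ?_, ?_⟩ <;> simp [hB, mul_comm]

lemma IsGES3.curveSol_coeff₂₁_ne_zero (h : IsGES3 (curveSol X A B C D)) : C ≠ 0 := by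
  intro hC
  refine not_isGES3_of_tensorB_mem (b := ![0, 1]) (G := !![0, -D; 1, 0]) (by simp)
    (fun hG => by simpa using congr($hG 1 0)) ?_ h
  refine ⟨?_, ?_, ?_, ?_, ?_⟩ <;> simp [hC]

lemma IsGES3.curveSol_mul_sub_ne_zero (h : IsGES3 (curveSol X A B C D)) : A * D - X ≠ 0 := by
  intro hAD
  refine not_isGES3_of_tensorB_mem (b := ![C, B * D]) (G := !![0, -D; 1, 0])
    (by simp [h.curveSol_coeff₂₁_ne_zero]) (fun hG => by simpa using congr($hG 1 0)) ?_ h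
  obtain rfl : X = A * D := (sub_eq_zero.1 hAD).symm
  refine ⟨?_, ?_, ?_, ?_, ?_⟩ <;> simp [mul_comm, mul_left_comm]

lemma eq_zero_of_mem_curveSol_of_biprodA (hX : X ≠ 0) (hdet : A * D - B * C ≠ 0)
    (hψ : ψ ∈ curveSol X A B C D) (h : BiprodA ψ) : ψ = 0 := by
  obtain ⟨a, g, hag⟩ := h
  obtain ⟨h₀, h₁, h₂, h₃, h₄⟩ := hψ
  simp only [hag] at h₀ h₁ h₂ h₃ h₄
  refine eq_zero_of_eq_mul_left hag ?_
  -- with `u, v` the images of `(g₀₁, g₁₀)` under the invertible matrix `[[A, C], [B, D]]`,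
  -- the equations say that `(a₀ + a₁ t) (X g₀₀ + u t + v t² + g₁₁ t³) = 0`
  set u := A * g (0,1) + C * g (1,0)
  set v := B * g (0,1) + D * g (1,0)
  rcases eq_zero_or_eq_zero_of_linear_mul_cubic (a₀ := a 0) (a₁ := a 1) (p₀ := X * g (0,0))
      (p₁ := u) (p₂ := v) (by linear_combination X * h₀) (by linear_combination h₁)
      (by linear_combination h₂) (by linear_combination h₃) h₄ with ⟨ha₀, ha₁⟩ | ⟨hg₀₀, hu, hv, hg₁₁⟩
  · exact .inl (funext (Fin.forall_fin_two.2 ⟨ha₀, ha₁⟩))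
  · right
    have hg₀₁ : (A * D - B * C) * g (0,1) = 0 := by linear_combination D * hu - C * hv
    have hg₁₀ : (A * D - B * C) * g (1,0) = 0 := by linear_combination A * hv - B * hu
    ext ⟨j, k⟩
    fin_cases j <;> fin_cases k <;> simp_all

lemma eq_zero_of_mem_curveSol_of_biprodB (hX : X ≠ 0) (hB : B ≠ 0) (hC : C ≠ 0)
    (hAD : A * D - X ≠ 0) (hψ : ψ ∈ curveSol X A B C D) (h : BiprodB ψ) : ψ = 0 := by
  obtain ⟨b, g, hbg⟩ := h
  obtain ⟨h₀, h₁, h₂, h₃, h₄⟩ := hψ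
  simp only [hbg] at h₀ h₁ h₂ h₃ h₄
  refine eq_zero_of_eq_mul_middle hbg ?_
  by_cases hb : b 0 = 0 ∧ b 1 = 0
  · exact .inl (funext (Fin.forall_fin_two.2 hb))
  refine .inr (funext ?_)
  simp only [Prod.forall, Fin.forall_fin_two, Pi.zero_apply]
  rcases eq_or_ne (b 0) 0 with hb₀ | hb₀
  · have hb₁ : b 1 ≠ 0 := fun hb₁ => hb ⟨hb₀, hb₁⟩
    have hg₀₀ : g (0,0) = 0 := by simpa [hb₀, hb₁, hC] using h₁
    have hg₁₀ : g (1,0) = 0 := by simpa [hb₀, hb₁, hC, hg₀₀] using h₂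
    have hg₀₁ : g (0,1) = 0 := by simpa [hb₀, hb₁, hg₁₀] using h₃
    have hg₁₁ : g (1,1) = 0 := by simpa [hb₁] using h₄
    exact ⟨⟨hg₀₀, hg₀₁⟩, hg₁₀, hg₁₁⟩
  have hg₀₀ : g (0,0) = 0 := by simpa [hb₀] using h₀
  rcases eq_or_ne (b 1) 0 with hb₁ | hb₁
  · have hg₁₁ : g (1,1) = 0 := by simpa [hb₀, hb₁, hB] using h₃
    have hg₀₁ : g (0,1) = 0 := by simpa [hb₀, hb₁, hB, hg₁₁] using h₂
    have hg₁₀ : g (1,0) = 0 := by simpa [hb₀, hb₁, hX, hg₀₁] using h₁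
    exact ⟨⟨hg₀₀, hg₀₁⟩, hg₁₀, hg₁₁⟩
  · have hg₁₁ : g (1,1) = 0 := by simpa [hb₁] using h₄
    have e₁ : A * g (0,1) + X * g (1,0) = 0 := by
      refine (mul_eq_zero.1 ?_).resolve_left hb₀
      linear_combination h₁ - C * b 1 * hg₀₀
    have e₃ : g (0,1) + D * g (1,0) = 0 := by
      refine (mul_eq_zero.1 ?_).resolve_left hb₁
      linear_combination h₃ - B * b 0 * hg₁₁
    have hg₁₀ : g (1,0) = 0 := by
      refine (mul_eq_zero.1 ?_).resolve_left hAD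
      linear_combination A * e₃ - e₁
    have hg₀₁ : g (0,1) = 0 := by linear_combination e₃ - D * hg₁₀
    exact ⟨⟨hg₀₀, hg₀₁⟩, hg₁₀, hg₁₁⟩

lemma eq_zero_of_mem_curveSol_of_biprodC (hX : X ≠ 0) (hA : A ≠ 0) (hD : D ≠ 0)
    (hBC : B * C - X ≠ 0) (hψ : ψ ∈ curveSol X A B C D) (h : BiprodC ψ) : ψ = 0 :=
  swapBC_eq_zero_iff.1 <| eq_zero_of_mem_curveSol_of_biprodB hX hD hA (by rwa [mul_comm])
    (swapBC_mem_curveSol hψ) h.swapBC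

theorem isGES3_curveSol_iff (hX : X ≠ 0) (hdet : A * D - B * C ≠ 0) :
    IsGES3 (curveSol X A B C D) ↔
      A ≠ 0 ∧ B ≠ 0 ∧ C ≠ 0 ∧ D ≠ 0 ∧ A * D - X ≠ 0 ∧ B * C - X ≠ 0 := by
  constructor
  · intro h
    have h' := h.curveSol_swap
    exact ⟨h'.curveSol_coeff₂₁_ne_zero, h.curveSol_coeff₁₂_ne_zero hX, h.curveSol_coeff₂₁_ne_zero,
      h'.curveSol_coeff₁₂_ne_zero hX, h.curveSol_mul_sub_ne_zero,
      by simpa only [mul_comm] using h'.curveSol_mul_sub_ne_zero⟩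
  · rintro ⟨hA, hB, hC, hD, hAD, hBC⟩ ψ hψ hne
    exact ⟨hne, fun h => hne (eq_zero_of_mem_curveSol_of_biprodA hX hdet hψ h),
      fun h => hne (eq_zero_of_mem_curveSol_of_biprodB hX hB hC hAD hψ h),
      fun h => hne (eq_zero_of_mem_curveSol_of_biprodC hX hA hD hBC hψ h)⟩

end CurveSol

lemma inner_curveA (x a₁₁ a₁₂ a₂₁ a₂₂ α : ℂ) (ψ : TriH 2 2 2) :
    inner ℂ (curveA !![x, 0, 0, 0; 0, a₁₁, a₁₂, 0; 0, a₂₁, a₂₂, 0; 0, 0, 0, 1] α) ψ =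
      ∑ i : Fin 5, ![conj x * ψ (0,0,0),
        conj a₁₁ * ψ (0,0,1) + conj a₂₁ * ψ (0,1,0) + conj x * ψ (1,0,0),
        conj a₁₂ * ψ (0,0,1) + conj a₂₂ * ψ (0,1,0) + conj a₁₁ * ψ (1,0,1) + conj a₂₁ * ψ (1,1,0),
        ψ (0,1,1) + conj a₁₂ * ψ (1,0,1) + conj a₂₂ * ψ (1,1,0),
        ψ (1,1,1)] i * conj α ^ (i : ℕ) := by
  simp only [PiLp.inner_apply, RCLike.inner_apply, Fintype.sum_prod_type, Fin.sum_univ_succ,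
    Finset.univ_unique, Finset.sum_singleton, curveA, idx4, Matrix.mulVec, dotProduct,
    Matrix.of_apply, Matrix.cons_val', Matrix.cons_val_fin_one, Matrix.cons_val_zero,
    Matrix.cons_val_one, Matrix.cons_val_succ, Matrix.cons_val_succ', Matrix.cons_val,
    Fin.isValue, Fin.default_eq_zero, Fin.succ_zero_eq_one, Fin.zero_eta, Fin.reduceFinMk,
    Fin.val_succ, Fin.val_eq_zero, Fin.coe_ofNat_eq_mod, Nat.zero_mod, Nat.succ_eq_add_one,
    Nat.reduceAdd, map_add, map_mul, map_pow, map_zero, map_one, mul_zero, zero_mul, mul_one,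
    one_mul, add_zero, zero_add, pow_zero, pow_one]
  ring

lemma orthogonal_span_range_curveA {x : ℂ} (hx : x ≠ 0) (a₁₁ a₁₂ a₂₁ a₂₂ : ℂ) :
    (Submodule.span ℂ (Set.range (curveA
        !![x, 0, 0, 0; 0, a₁₁, a₁₂, 0; 0, a₂₁, a₂₂, 0; 0, 0, 0, 1])))ᗮ =
      curveSol (conj x) (conj a₁₁) (conj a₁₂) (conj a₂₁) (conj a₂₂) := by
  ext ψ
  simp only [Submodule.mem_orthogonal_span_range_iff, inner_curveA]
  constructor
  · intro h
    have hc := eq_zero_of_forall_sum_mul_pow_eq_zero fun z => by simpa using h (conj z)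
    simp only [funext_iff, Pi.zero_apply, Fin.forall_fin_succ, Matrix.cons_val_zero,
      Matrix.cons_val_succ, Matrix.cons_val_fin_one, mul_eq_zero, map_eq_zero, hx, false_or,
      forall_const] at hc
    exact hc
  · rintro ⟨h₀, h₁, h₂, h₃, h₄⟩ α
    simp [Fin.sum_univ_succ, h₀, h₁, h₂, h₃, h₄]

/-- for the block matrix `𝒜(x)` with rows `(x,0,0,0)`, `(0,a₁₁,a₁₂,0)`,
`(0,a₂₁,a₂₂,0)`, `(0,0,0,1)` (with `x ≠ 0` and `a₁₁a₂₂ − a₁₂a₂₁ ≠ 0`), the subspace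
`(span{(1,α) ⊗ 𝒜(x)(1,α,α²,α³)})^⊥` is a GES of `ℂ²⊗ℂ²⊗ℂ²` iff all `aᵢⱼ ≠ 0`,
`a₁₁a₂₂ − x ≠ 0` and `a₁₂a₂₁ − x ≠ 0`. -/
theorem solved_class (x a₁₁ a₁₂ a₂₁ a₂₂ : ℂ) (hx : x ≠ 0)
    (hdet : a₁₁ * a₂₂ - a₁₂ * a₂₁ ≠ 0) :
    IsGES3 ((Submodule.span ℂ (Set.range (curveA
        !![x, 0, 0, 0; 0, a₁₁, a₁₂, 0; 0, a₂₁, a₂₂, 0; 0, 0, 0, 1])))ᗮ) ↔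
      (a₁₁ ≠ 0 ∧ a₁₂ ≠ 0 ∧ a₂₁ ≠ 0 ∧ a₂₂ ≠ 0 ∧
        a₁₁ * a₂₂ - x ≠ 0 ∧ a₁₂ * a₂₁ - x ≠ 0) := by
  rw [orthogonal_span_range_curveA hx, isGES3_curveSol_iff ((map_ne_zero _).2 hx)]
  · simp only [← map_mul, ← map_sub, map_ne_zero]
  · rw [← map_mul, ← map_mul, ← map_sub]
    exact (map_ne_zero _).2 hdet
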